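/- arXiv:1610.09467 — 3 statements merged into one kernel-verified Lean document; each statement's English description precedes it below -/
import Mathlib

section
/- Let p be a prime and let a be a nonzero element of F_p. The number of matrices g in GL_2(F_p) with trace equal to a is exactly p(p^2 - p - 1). -/
/-!
A matrix of trace `a` is `!![x, y; z, a - x]`, so these matrices form a copy of `F³` and the
singular ones are the solutions of `x (a - x) = y z`. For fixed `x` the equation `y z = c` has
`2q - 1` solutions if `c = 0` and `q - 1` otherwise; since `a ≠ 0`, the value `c = x (a - x)`
vanishes for exactly two `x`, giving `q (q - 1) + 2q = q² + q` singular matrices and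
`q³ - q² - q` invertible ones.
-/

open Matrix Finset

theorem Units.natCard_subtype_val {M : Type*} [Monoid M] (P : M → Prop) :
    Nat.card {u : Mˣ // P u} = Nat.card {x : M // P x ∧ IsUnit x} :=
  Nat.card_congr
    { toFun u := ⟨u.1, u.2, u.1.isUnit⟩
      invFun x := ⟨x.2.2.unit, x.2.1⟩
      left_inv _ := Subtype.ext (Units.ext rfl)
      right_inv _ := rfl }

section TraceSlice

variable {R : Type*} [CommRing R]

def traceEqEquiv (a : R) : R × R × R ≃ {M : Matrix (Fin 2) (Fin 2) R // M.trace = a} where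
  toFun v := ⟨!![v.1, v.2.1; v.2.2, a - v.1], by simp [trace_fin_two]⟩
  invFun M := (M.1 0 0, M.1 0 1, M.1 1 0)
  left_inv _ := rfl
  right_inv := by
    rintro ⟨M, hM⟩
    have : a - M 0 0 = M 1 1 := by rw [← hM, trace_fin_two]; ring
    ext i j
    fin_cases i <;> fin_cases j <;> simp [this]

theorem det_traceEqEquiv (a : R) (v : R × R × R) :
    (traceEqEquiv a v).1.det = v.1 * (a - v.1) - v.2.1 * v.2.2 :=
  det_fin_two_of _ _ _ _

end TraceSlice

section FiniteField

variable {F : Type*} [Field F] [Fintype F] [DecidableEq F]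

local notation "q" => Fintype.card F

theorem card_filter_mul_eq_zero : #{yz : F × F | yz.1 * yz.2 = 0} = 2 * q - 1 := by
  have h_union : ({yz : F × F | yz.1 * yz.2 = 0} : Finset (F × F))
      = ({0} ×ˢ univ) ∪ (univ ×ˢ {0}) := by
    ext ⟨y, z⟩
    simp [mul_eq_zero, eq_comm]
  have h_inter : ({0} ×ˢ univ) ∩ (univ ×ˢ {0}) = ({(0, 0)} : Finset (F × F)) := by
    ext ⟨y, z⟩
    simp [eq_comm]
  have h := card_union_add_card_inter ({0} ×ˢ univ : Finset (F × F)) (univ ×ˢ {0})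
  rw [h_inter, card_singleton, card_product, card_product, card_singleton, card_univ] at h
  rw [h_union]
  omega

theorem card_filter_mul_eq_of_ne_zero {c : F} (hc : c ≠ 0) :
    #{yz : F × F | yz.1 * yz.2 = c} = q - 1 := by
  have h_ne_zero {y z : F} (h : y * z = c) : y ≠ 0 := left_ne_zero_of_mul (h ▸ hc)
  rw [← card_univ, ← card_erase_of_mem (mem_univ 0)]
  refine card_nbij' Prod.fst (fun y => (y, c / y)) ?_ ?_ ?_ ?_
  · rintro ⟨y, z⟩ h
    simpa using h_ne_zero (mem_filter.mp h).2
  · intro y hy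
    simp_all [mul_div_cancel₀]
  · rintro ⟨y, z⟩ h
    have h := (mem_filter.mp h).2
    simp [← h, mul_div_cancel_left₀ z (h_ne_zero h)]
  · intro _ _
    rfl

theorem card_filter_mul_eq (c : F) :
    #{yz : F × F | yz.1 * yz.2 = c} = q - 1 + if c = 0 then q else 0 := by
  have : 0 < q := Fintype.card_pos
  split_ifs with hc
  · rw [hc, card_filter_mul_eq_zero]
    omega
  · rw [card_filter_mul_eq_of_ne_zero hc, add_zero]

theorem card_filter_mul_sub_eq_zero {a : F} (ha : a ≠ 0) : #{x : F | x * (a - x) = 0} = 2 := by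
  have : ({x : F | x * (a - x) = 0} : Finset F) = {0, a} := by
    ext x
    simp [mul_eq_zero, sub_eq_zero, eq_comm]
  rw [this, card_pair ha.symm]

theorem card_filter_mul_sub_eq_mul {a : F} (ha : a ≠ 0) :
    #{v : F × F × F | v.1 * (a - v.1) = v.2.1 * v.2.2} = q ^ 2 + q := by
  have : 0 < q := Fintype.card_pos
  calc #{v : F × F × F | v.1 * (a - v.1) = v.2.1 * v.2.2}
      = ∑ x : F, #{yz : F × F | yz.1 * yz.2 = x * (a - x)} := by
        simp only [card_filter, Fintype.sum_prod_type, eq_comm]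
    _ = q * (q - 1) + 2 * q := by
        simp only [card_filter_mul_eq, sum_add_distrib, sum_const, card_univ, smul_eq_mul,
          ← sum_filter, card_filter_mul_sub_eq_zero ha]
    _ = q ^ 2 + q := by
        obtain ⟨k, hk⟩ := Nat.exists_eq_add_one.mpr this
        rw [hk, Nat.add_sub_cancel]
        ring

theorem natCard_GL_two_trace_eq {a : F} (ha : a ≠ 0) :
    Nat.card {g : GL (Fin 2) F // (g : Matrix (Fin 2) (Fin 2) F).trace = a}
      = q * (q ^ 2 - q - 1) := by
  calc Nat.card {g : GL (Fin 2) F // (g : Matrix (Fin 2) (Fin 2) F).trace = a}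
      = Nat.card {v : F × F × F // IsUnit (traceEqEquiv a v).1} := by
        rw [Units.natCard_subtype_val (fun M : Matrix (Fin 2) (Fin 2) F => M.trace = a),
          ← Nat.card_congr (Equiv.subtypeSubtypeEquivSubtypeInter _ _)]
        exact (Nat.card_congr (traceEqEquiv a).subtypeEquivOfSubtype).symm
    _ = #{v : F × F × F | ¬v.1 * (a - v.1) = v.2.1 * v.2.2} := by
        simp only [isUnit_iff_isUnit_det, det_traceEqEquiv, isUnit_iff_ne_zero, sub_ne_zero,
          Nat.card_eq_fintype_card, Fintype.card_subtype]
    _ = q ^ 3 - (q ^ 2 + q) := by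
        rw [filter_not, card_sdiff, inter_univ, card_filter_mul_sub_eq_mul ha, card_univ,
          Fintype.card_prod, Fintype.card_prod]
        ring_nf
    _ = q * (q ^ 2 - q - 1) := by
        rw [Nat.mul_sub, Nat.mul_sub, Nat.sub_sub]
        ring_nf

end FiniteField

theorem stmt_1 (p : ℕ) (hp : p.Prime) (a : ZMod p) (ha : a ≠ 0) :
    Nat.card {g : GL (Fin 2) (ZMod p) // Matrix.trace (g : Matrix (Fin 2) (Fin 2) (ZMod p)) = a}
      = p * (p ^ 2 - p - 1) := by
  have := Fact.mk hp
  rw [natCard_GL_two_trace_eq ha, ZMod.card]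
end

section
/- Let C = ∏_{p prime} (1 - 3·p^{-2} + 2·p^{-3}), a positive real number. Then as X tends to infinity (over the reals), the sum ∑ 2^{ω(N)}, taken over squarefree integers N with X ≤ N ≤ 2X, is asymptotic to C · X · log X; that is, the ratio of the sum to X·log X tends to C. -/
/-!
Let `F(N) = 2^ω(N)` for squarefree `N` and `F(N) = 0` otherwise. Since
`1 + 2x = (1 - 3x² + 2x³) / (1 - x)²`, comparing Euler factors gives `F = g * τ`, where `τ = σ₀`
and `g` is multiplicative with `g(p²) = -3`, `g(p³) = 2` and `g(p^e) = 0` for all other `e ≥ 1`.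
Hence `∑_{N ≤ n} F(N) = ∑_d g(d) D(n / d)` with `D(m) = ∑_{k ≤ m} τ(k) = m log m + O(m)`. The
Euler factors of `∑_d |g(d)| / d` are `1 + O(p⁻²)`, so this series converges, and dominated
convergence gives `∑_{N ≤ cX} F(N) ~ c (∑_d g(d) / d) X log X`; the cases `c = 2` and `c = 1` give
the sum over `[X, 2X]`. The Euler product of `∑_d g(d) / d` is the product defining `C`, which is
positive because `1 - 3p⁻² + 2p⁻³ = (1 - p⁻¹)²(1 + 2p⁻¹) > 0` and `∑_p p⁻² < ∞`.
-/

open Filter Finset Real Topology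
open scoped ArithmeticFunction.sigma

theorem summable_of_multiplicative_of_prod_primesBelow_le {f : ℕ → ℝ} (hf : ∀ n, 0 ≤ f n)
    (hf₀ : f 0 = 0) (hf₁ : f 1 = 1) (hmul : ∀ {m n}, m.Coprime n → f (m * n) = f m * f n)
    (hsum : ∀ {p}, p.Prime → Summable fun e => f (p ^ e)) {B : ℝ}
    (hB : ∀ N : ℕ, ∏ p ∈ N.primesBelow, ∑' e, f (p ^ e) ≤ B) : Summable f := by
  refine summable_of_sum_range_le (c := B) hf fun N => ?_
  have hsmooth := (EulerProduct.summable_and_hasSum_smoothNumbers_prod_primesBelow_tsum hf₁ hmul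
    (fun hp => by simpa [Real.norm_eq_abs, abs_of_nonneg (hf _)] using hsum hp) N).2
  replace hsmooth := hasSum_subtype_iff_indicator.mp hsmooth
  calc ∑ n ∈ range N, f n = ∑ n ∈ range N, N.smoothNumbers.indicator f n := by
        refine sum_congr rfl fun n hn => ?_
        rcases Nat.eq_zero_or_pos n with rfl | hn0
        · simp [Set.indicator_apply, hf₀]
        · rw [Set.indicator_of_mem (Nat.mem_smoothNumbers_of_lt hn0 (mem_range.mp hn))]
    _ ≤ ∏ p ∈ N.primesBelow, ∑' e, f (p ^ e) :=
        sum_le_hasSum _ (fun n _ => Set.indicator_nonneg (fun n _ => hf n) n) hsmooth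
    _ ≤ B := hB N

lemma tprod_one_add_pos {ι : Type*} {y : ι → ℝ} (hy : Summable y) (hpos : ∀ i, 0 < 1 + y i) :
    0 < ∏' i, (1 + y i) := by
  rw [← rexp_tsum_eq_tprod hpos (summable_log_one_add_of_summable hy)]
  exact exp_pos _

noncomputable def divisorSummatory (n : ℕ) : ℝ := ∑ k ∈ Ioc 0 n, (σ 0 k : ℝ)

lemma divisorSummatory_eq_sum_div (n : ℕ) :
    divisorSummatory n = ∑ k ∈ Ioc 0 n, ((n / k : ℕ) : ℝ) := by
  rw [divisorSummatory]
  exact_mod_cast ArithmeticFunction.sum_Ioc_sigma0_eq_sum_div n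

lemma natCast_mul_harmonic_eq_sum (n : ℕ) :
    n * (harmonic n : ℝ) = ∑ k ∈ Ioc 0 n, (n : ℝ) / k := by
  rw [harmonic_eq_sum_Icc, ← Finset.Icc_add_one_left_eq_Ioc]
  push_cast
  rw [mul_sum]
  rfl

lemma divisorSummatory_le (n : ℕ) : divisorSummatory n ≤ n * (1 + log n) :=
  calc divisorSummatory n ≤ n * (harmonic n : ℝ) := by
        rw [divisorSummatory_eq_sum_div, natCast_mul_harmonic_eq_sum]
        exact sum_le_sum fun k _ => Nat.cast_div_le
    _ ≤ n * (1 + log n) := by gcongr; exact harmonic_le_one_add_log n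

lemma le_divisorSummatory (n : ℕ) : n * log n - n ≤ divisorSummatory n :=
  calc n * log n - n ≤ n * (harmonic n : ℝ) - n := by
        gcongr
        rcases Nat.eq_zero_or_pos n with rfl | hn
        · simp
        · exact (log_le_log (by positivity) (by norm_cast; omega)).trans
            (log_add_one_le_harmonic n)
    _ = ∑ k ∈ Ioc 0 n, ((n : ℝ) / k - 1) := by
        rw [natCast_mul_harmonic_eq_sum, sum_sub_distrib, sum_const, Nat.card_Ioc]
        simp
    _ ≤ divisorSummatory n := by
        rw [divisorSummatory_eq_sum_div]
        refine sum_le_sum fun k _ => ?_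
        rw [← Nat.floor_div_eq_div (K := ℝ)]
        exact (Nat.sub_one_lt_floor _).le

lemma divisorSummatory_nonneg (n : ℕ) : 0 ≤ divisorSummatory n := by
  unfold divisorSummatory
  positivity

lemma divisorSummatory_le_of_le {m n : ℕ} (h : m ≤ n) : divisorSummatory m ≤ m * (1 + log n) := by
  rcases Nat.eq_zero_or_pos m with rfl | hm
  · simp [divisorSummatory]
  · refine (divisorSummatory_le m).trans ?_
    gcongr

lemma tendsto_mul_log_add_div (c : ℝ) :
    Tendsto (fun n : ℕ => (n * log n + c * n) / (n * log n)) atTop (𝓝 1) := by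
  have h := ((tendsto_log_atTop.comp tendsto_natCast_atTop_atTop).inv_tendsto_atTop.const_mul c
    ).const_add 1
  rw [mul_zero, add_zero] at h
  refine h.congr' ?_
  filter_upwards [eventually_gt_atTop 1] with n hn
  have hlog : 0 < log n := log_pos (by exact_mod_cast hn)
  simp only [Function.comp_apply, Pi.inv_apply]
  field_simp

lemma tendsto_divisorSummatory_div :
    Tendsto (fun n : ℕ => divisorSummatory n / (n * log n)) atTop (𝓝 1) := by
  refine tendsto_of_tendsto_of_tendsto_of_le_of_le' (tendsto_mul_log_add_div (-1))
    (tendsto_mul_log_add_div 1) ?_ ?_ <;>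
  filter_upwards [eventually_gt_atTop 1] with n hn <;>
  have hlog : 0 < log n := log_pos (by exact_mod_cast hn) <;>
  gcongr
  · linarith [le_divisorSummatory n]
  · linarith [divisorSummatory_le n]

theorem tendsto_comp_div_mul_log {a : ℕ → ℝ} (ha : Tendsto (fun n => a n / (n * log n)) atTop (𝓝 1))
    {u : ℝ → ℕ} {c : ℝ} (hc : 0 < c) (hu : Tendsto (fun X => (u X : ℝ) / X) atTop (𝓝 c)) :
    Tendsto (fun X => a (u X) / (X * log X)) atTop (𝓝 c) := by
  have hu_top : Tendsto u atTop atTop := by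
    refine tendsto_natCast_atTop_iff.mp ((hu.pos_mul_atTop hc tendsto_id).congr' ?_)
    filter_upwards [eventually_gt_atTop 0] with X hX
    exact div_mul_cancel₀ _ hX.ne'
  have hlog : Tendsto (fun X => log (u X) / log X) atTop (𝓝 1) := by
    have h := (((continuousAt_log hc.ne').tendsto.comp hu).mul
      tendsto_log_atTop.inv_tendsto_atTop).const_add 1
    rw [mul_zero, add_zero] at h
    refine h.congr' ?_
    filter_upwards [hu_top.eventually_gt_atTop 0, eventually_gt_atTop 1] with X hn hX
    have hlogX : 0 < log X := log_pos hX
    rw [Function.comp_apply, Pi.inv_apply, log_div (by positivity) (by positivity)]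
    field_simp
    ring
  have h := ((ha.comp hu_top).mul hu).mul hlog
  rw [one_mul, mul_one] at h
  refine h.congr' ?_
  filter_upwards [hu_top.eventually_gt_atTop 1, eventually_gt_atTop 1] with X hn hX
  have hlogn : 0 < log (u X) := log_pos (by exact_mod_cast hn)
  have hlogX : 0 < log X := log_pos hX
  have hn0 : (0 : ℝ) < u X := by positivity
  simp only [Function.comp_apply]
  field_simp

lemma tendsto_natCast_div_div {u : ℝ → ℕ} {c : ℝ}
    (hu : Tendsto (fun X => (u X : ℝ) / X) atTop (𝓝 c)) (d : ℕ) : Tendsto (fun X => ((u X / d : ℕ) : ℝ) / X) atTop (𝓝 (c / d)) := by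
  have hupper := hu.div_const d
  have hlower := hupper.sub (tendsto_inv_atTop_zero (𝕜 := ℝ))
  rw [sub_zero] at hlower
  refine tendsto_of_tendsto_of_tendsto_of_le_of_le' hlower hupper ?_ ?_ <;>
  filter_upwards [eventually_gt_atTop 0] with X hX
  · have h : (u X : ℝ) / d - 1 ≤ ((u X / d : ℕ) : ℝ) := by
      rw [← Nat.floor_div_eq_div (K := ℝ)]
      exact (Nat.sub_one_lt_floor _).le
    calc (u X : ℝ) / X / d - X⁻¹ = ((u X : ℝ) / d - 1) / X := by ring
      _ ≤ ((u X / d : ℕ) : ℝ) / X := by gcongr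
  · rw [div_right_comm]
    gcongr
    exact Nat.cast_div_le

lemma tendsto_natCast_sub_div {u : ℝ → ℕ} {c : ℝ}
    (hu : Tendsto (fun X => (u X : ℝ) / X) atTop (𝓝 c)) (m : ℕ) : Tendsto (fun X => ((u X - m : ℕ) : ℝ) / X) atTop (𝓝 c) := by
  have hlower := hu.sub ((tendsto_const_nhds (x := (m : ℝ))).div_atTop tendsto_id)
  rw [sub_zero] at hlower
  refine tendsto_of_tendsto_of_tendsto_of_le_of_le' hlower hu ?_ ?_ <;>
  filter_upwards [eventually_gt_atTop 0] with X hX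
  · have h : (u X : ℝ) ≤ ((u X - m : ℕ) : ℝ) + m := by
      exact_mod_cast (by omega : u X ≤ u X - m + m)
    calc (u X : ℝ) / X - m / id X = ((u X : ℝ) - m) / X := by rw [id, sub_div]
      _ ≤ ((u X - m : ℕ) : ℝ) / X := by gcongr; linarith
  · gcongr
    exact Nat.sub_le _ _

lemma sum_Ioc_mul_sigma_zero_eq_tsum (g : ArithmeticFunction ℝ) (n : ℕ) :
    ∑ N ∈ Ioc 0 n, (g * (σ 0 : ArithmeticFunction ℕ)) N = ∑' d, g d * divisorSummatory (n / d) := by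
  rw [ArithmeticFunction.sum_Ioc_mul_eq_sum_sum, tsum_eq_sum (s := Ioc 0 n) fun d hd => ?_]
  · simp [divisorSummatory, ArithmeticFunction.natCoe_apply]
  · rcases Nat.eq_zero_or_pos d with rfl | hd0
    · rw [ArithmeticFunction.map_zero, zero_mul]
    · have : n < d := by simpa [hd0] using hd
      simp [Nat.div_eq_of_lt this, divisorSummatory]

theorem tendsto_sum_Ioc_mul_sigma_zero_div {g : ArithmeticFunction ℝ}
    (hg : Summable fun d => |g d| / d) {u : ℝ → ℕ} {c : ℝ} (hc : 0 < c)
    (hu : Tendsto (fun X => (u X : ℝ) / X) atTop (𝓝 c)) :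
    Tendsto (fun X => (∑ N ∈ Ioc 0 (u X), (g * (σ 0 : ArithmeticFunction ℕ)) N) / (X * log X))
      atTop (𝓝 (c * ∑' d, g d / d)) := by
  simp_rw [sum_Ioc_mul_sigma_zero_eq_tsum, ← tsum_div_const, ← tsum_mul_left, mul_div_left_comm c]
  have hmajor : Tendsto (fun X => u X * (1 + log (u X)) / (X * log X)) atTop (𝓝 c) :=
    tendsto_comp_div_mul_log (a := fun n => n * (1 + log n))
      ((tendsto_mul_log_add_div 1).congr fun n => by ring) hc hu
  refine tendsto_tsum_of_dominated_convergence (hg.mul_left (c + 1)) (fun d => ?_) ?_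
  · rcases Nat.eq_zero_or_pos d with rfl | hd
    · simp
    · have h := (tendsto_comp_div_mul_log tendsto_divisorSummatory_div (by positivity)
        (tendsto_natCast_div_div hu d)).const_mul (g d)
      exact h.congr fun X => by ring
  · filter_upwards [hmajor.eventually_le_const (lt_add_one c), eventually_gt_atTop 1]
      with X hmaj hX d
    have hXlog : 0 < X * log X := mul_pos (by linarith) (log_pos hX)
    rw [norm_div, norm_mul, Real.norm_eq_abs, Real.norm_eq_abs, Real.norm_eq_abs,
      abs_of_nonneg (divisorSummatory_nonneg _), abs_of_pos hXlog]
    have hD : divisorSummatory (u X / d) ≤ (u X : ℝ) / d * (1 + log (u X)) :=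
      (divisorSummatory_le_of_le (Nat.div_le_self _ _)).trans
        (mul_le_mul_of_nonneg_right Nat.cast_div_le (by positivity))
    calc |g d| * divisorSummatory (u X / d) / (X * log X)
        ≤ |g d| * ((u X : ℝ) / d * (1 + log (u X))) / (X * log X) := by gcongr
      _ = |g d| / d * (u X * (1 + log (u X)) / (X * log X)) := by ring
      _ ≤ |g d| / d * (c + 1) := by gcongr
      _ = (c + 1) * (|g d| / d) := mul_comm _ _

namespace SquarefreeTwoPow

open ArithmeticFunction

noncomputable def weight : ArithmeticFunction ℝ :=
  ⟨fun n => if Squarefree n then 2 ^ n.primeFactors.card else 0, by simp⟩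

lemma weight_apply (n : ℕ) :
    weight n = if Squarefree n then 2 ^ n.primeFactors.card else 0 := rfl

lemma isMultiplicative_weight : weight.IsMultiplicative := by
  refine ⟨by simp [weight_apply], fun {m n} hmn => ?_⟩
  simp only [weight_apply, Nat.squarefree_mul hmn]
  by_cases hm : Squarefree m <;> by_cases hn : Squarefree n <;> simp only [hm, hn, and_self,
    and_false, false_and, if_true, if_false, mul_zero, zero_mul]
  rw [Nat.primeFactors_mul hm.ne_zero hn.ne_zero,
    card_union_of_disjoint hmn.disjoint_primeFactors, pow_add]

lemma weight_apply_prime_pow {p : ℕ} (hp : p.Prime) (i : ℕ) :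
    weight (p ^ i) = if i = 0 then 1 else if i = 1 then 2 else 0 := by
  rcases Nat.lt_or_ge i 2 with hi | hi
  · interval_cases i <;> simp [weight_apply, hp.squarefree, hp.primeFactors]
  · have hsq : ¬Squarefree (p ^ i) := by
      rw [Nat.squarefree_pow_iff hp.ne_one (by omega)]
      omega
    rw [weight_apply, if_neg hsq, if_neg (by omega), if_neg (by omega)]

def correctionCoeff : ℕ → ℝ
  | 0 => 1
  | 2 => -3
  | 3 => 2
  | _ => 0

noncomputable def correction : ArithmeticFunction ℝ :=
  ⟨fun n => if n = 0 then 0 else n.factorization.prod fun _ e => correctionCoeff e, if_pos rfl⟩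

lemma correction_apply {n : ℕ} (hn : n ≠ 0) :
    correction n = n.factorization.prod fun _ e => correctionCoeff e := if_neg hn

lemma isMultiplicative_correction : correction.IsMultiplicative := by
  refine IsMultiplicative.iff_ne_zero.mpr ⟨by simp [correction_apply], fun {m n} hm hn hmn => ?_⟩
  rw [correction_apply (mul_ne_zero hm hn), correction_apply hm, correction_apply hn,
    Nat.factorization_mul hm hn, Finsupp.prod_add_index_of_disjoint]
  simpa [Nat.support_factorization] using hmn.disjoint_primeFactors

lemma correction_apply_prime_pow {p : ℕ} (hp : p.Prime) (e : ℕ) :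
    correction (p ^ e) = correctionCoeff e := by
  rw [correction_apply (pow_ne_zero _ hp.ne_zero), hp.factorization_pow,
    Finsupp.prod_single_index rfl]

lemma sum_range_correctionCoeff_mul (i : ℕ) :
    ∑ j ∈ range (i + 1), correctionCoeff j * ((i - j : ℕ) + 1 : ℝ) =
      if i = 0 then 1 else if i = 1 then 2 else 0 := by
  match i with
  | 0 | 1 | 2 => norm_num [sum_range_succ, correctionCoeff]
  | k + 3 =>
    simp only [sum_range_succ', correctionCoeff]
    push_cast [show k + 3 - 3 = k by omega]
    simp only [zero_mul, sum_const_zero, zero_add, neg_mul, add_zero, one_mul]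
    ring

theorem weight_eq_correction_mul_sigma_zero :
    weight = correction * (σ 0 : ArithmeticFunction ℕ) := by
  refine (IsMultiplicative.eq_iff_eq_on_prime_powers _ isMultiplicative_weight _
    (isMultiplicative_correction.mul isMultiplicative_sigma.natCast)).mpr fun p i hp => ?_
  rw [weight_apply_prime_pow hp, mul_apply, Nat.sum_divisorsAntidiagonal
      (f := fun a b => correction a * ((σ 0 : ArithmeticFunction ℕ) : ArithmeticFunction ℝ) b),
    Nat.sum_divisors_prime_pow hp, ← sum_range_correctionCoeff_mul]
  refine sum_congr rfl fun j hj => ?_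
  rw [Nat.pow_div (Nat.lt_succ_iff.mp (mem_range.mp hj)) hp.pos, correction_apply_prime_pow hp,
    natCoe_apply, sigma_zero_apply_prime_pow hp]
  push_cast
  ring

lemma correctionCoeff_eq_zero {e : ℕ} (h : e ∉ ({0, 2, 3} : Finset ℕ)) : correctionCoeff e = 0 := by
  match e, h with
  | 1, _ | _ + 4, _ => rfl

lemma hasSum_correctionCoeff_mul_pow {φ : ℝ → ℝ} (hφ : φ 0 = 0) (x : ℝ) :
    HasSum (fun e => φ (correctionCoeff e) * x ^ e) (φ 1 + φ (-3) * x ^ 2 + φ 2 * x ^ 3) := by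
  have h : HasSum (fun e => φ (correctionCoeff e) * x ^ e)
      (∑ e ∈ {0, 2, 3}, φ (correctionCoeff e) * x ^ e) :=
    hasSum_sum_of_ne_finset_zero fun e he => by simp only [correctionCoeff_eq_zero he, hφ, zero_mul]
  convert h using 1
  rw [sum_insert (by decide), sum_insert (by decide), sum_singleton]
  simp only [correctionCoeff]
  ring

lemma correction_div_prime_pow {p : ℕ} (hp : p.Prime) (e : ℕ) :
    correction (p ^ e) / (p ^ e : ℕ) = correctionCoeff e * (p : ℝ)⁻¹ ^ e := by
  rw [correction_apply_prime_pow hp, Nat.cast_pow, inv_pow, div_eq_mul_inv]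

lemma correction_div_mul {m n : ℕ} (h : m.Coprime n) :
    correction (m * n) / (m * n : ℕ) = correction m / m * (correction n / n) := by
  rw [isMultiplicative_correction.map_mul_of_coprime h, Nat.cast_mul, mul_div_mul_comm]

lemma summable_abs_correction_div : Summable fun n => |correction n| / n := by
  have hlocal : ∀ {p : ℕ}, p.Prime → HasSum (fun e => |correction (p ^ e)| / (p ^ e : ℕ))
      (1 + 3 * (p : ℝ)⁻¹ ^ 2 + 2 * (p : ℝ)⁻¹ ^ 3) := fun {p} hp => by
    convert hasSum_correctionCoeff_mul_pow (φ := abs) abs_zero (p : ℝ)⁻¹ using 1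
    · ext e
      rw [← abs_of_nonneg (by positivity : 0 ≤ (p : ℝ)⁻¹ ^ e), ← abs_mul,
        ← correction_div_prime_pow hp, abs_div, Nat.abs_cast]
    · norm_num
  refine summable_of_multiplicative_of_prod_primesBelow_le (fun n => by positivity)
    (by simp) (by simp [isMultiplicative_correction.map_one])
    (fun h => by simpa [abs_mul, abs_div] using congrArg abs (correction_div_mul h))
    (fun hp => (hlocal hp).summable) (B := rexp (∑' n : ℕ, 5 * (n : ℝ)⁻¹ ^ 2)) fun N => ?_
  have hsum : Summable fun n : ℕ => 5 * (n : ℝ)⁻¹ ^ 2 :=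
    ((Real.summable_nat_pow_inv.mpr one_lt_two).congr fun n => (inv_pow _ _).symm).mul_left 5
  calc ∏ p ∈ N.primesBelow, ∑' e, |correction (p ^ e)| / (p ^ e : ℕ)
      = ∏ p ∈ N.primesBelow, (1 + (3 * (p : ℝ)⁻¹ ^ 2 + 2 * (p : ℝ)⁻¹ ^ 3)) :=
        prod_congr rfl fun p hp => by
          rw [(hlocal (Nat.prime_of_mem_primesBelow hp)).tsum_eq, add_assoc]
    _ ≤ rexp (∑ p ∈ N.primesBelow, (3 * (p : ℝ)⁻¹ ^ 2 + 2 * (p : ℝ)⁻¹ ^ 3)) :=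
        prod_one_add_le_exp_sum _ fun p => by positivity
    _ ≤ rexp (∑ n ∈ range N, 5 * (n : ℝ)⁻¹ ^ 2) := by
        refine exp_le_exp.mpr (sum_le_sum_of_subset_of_nonneg (filter_subset _ _)
          (fun n _ _ => by positivity) |>.trans' (sum_le_sum fun p _ => ?_))
        nlinarith [pow_le_pow_of_le_one (by positivity : 0 ≤ (p : ℝ)⁻¹) (Nat.cast_inv_le_one p)
          (by norm_num : 2 ≤ 3)]
    _ ≤ rexp (∑' n : ℕ, 5 * (n : ℝ)⁻¹ ^ 2) :=
        exp_le_exp.mpr (hsum.sum_le_tsum _ fun n _ => by positivity)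

lemma eulerFactor_eq (p : ℕ) :
    1 - 3 * (p : ℝ) ^ (-2 : ℤ) + 2 * (p : ℝ) ^ (-3 : ℤ) =
      1 + (p : ℝ)⁻¹ ^ 2 * (2 * (p : ℝ)⁻¹ - 3) := by
  simp only [zpow_neg, zpow_ofNat, inv_pow]
  ring

lemma hasProd_eulerFactor :
    HasProd (fun p : Nat.Primes => 1 - 3 * ((p : ℕ) : ℝ) ^ (-2 : ℤ) + 2 * ((p : ℕ) : ℝ) ^ (-3 : ℤ))
      (∑' n, correction n / n) := by
  have h := EulerProduct.eulerProduct_hasProd (f := fun n => correction n / n)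
    (by simp [isMultiplicative_correction.map_one]) correction_div_mul
    (by simpa [abs_div] using summable_abs_correction_div) (by simp)
  refine h.congr_fun fun p => ?_
  rw [((hasSum_correctionCoeff_mul_pow (φ := id) rfl _).congr_fun fun e =>
    correction_div_prime_pow p.prop e).tsum_eq, eulerFactor_eq]
  simp only [id]
  ring

lemma tprod_eulerFactor_pos :
    0 < ∏' p : Nat.Primes, (1 - 3 * ((p : ℕ) : ℝ) ^ (-2 : ℤ) + 2 * ((p : ℕ) : ℝ) ^ (-3 : ℤ)) := by
  simp only [eulerFactor_eq]
  refine tprod_one_add_pos ?_ fun p => ?_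
  · have hsq : Summable fun p : Nat.Primes => ((p : ℕ) : ℝ)⁻¹ ^ 2 :=
      ((Real.summable_nat_pow_inv.mpr one_lt_two).congr fun n => (inv_pow _ _).symm).comp_injective
        Subtype.val_injective
    refine (hsq.mul_left 3).of_norm_bounded fun p => ?_
    have hx := Nat.cast_inv_le_one (α := ℝ) p
    have hx0 : 0 ≤ ((p : ℕ) : ℝ)⁻¹ := by positivity
    rw [Real.norm_eq_abs, abs_le]
    constructor <;> nlinarith [sq_nonneg ((p : ℕ) : ℝ)⁻¹]
  · have hx : ((p : ℕ) : ℝ)⁻¹ ≤ 2⁻¹ := inv_anti₀ two_pos (by exact_mod_cast p.prop.two_le)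
    have hx0 : 0 < ((p : ℕ) : ℝ)⁻¹ := by have := p.prop.pos; positivity
    nlinarith [sq_nonneg (1 - ((p : ℕ) : ℝ)⁻¹)]

lemma sum_Icc_filter_squarefree_eq_sub {a b : ℕ} (ha : 1 ≤ a) (hab : a ≤ b + 1) :
    ∑ N ∈ Icc a b with Squarefree N, (2 : ℝ) ^ N.primeFactors.card =
      ∑ N ∈ Ioc 0 b, weight N - ∑ N ∈ Ioc 0 (a - 1), weight N := by
  have hIcc : Icc a b = Ioc (a - 1) b := by ext; simp only [mem_Icc, mem_Ioc]; omega
  rw [sum_filter, eq_sub_iff_add_eq',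
    ← sum_Ioc_consecutive _ (Nat.zero_le _) (by omega : a - 1 ≤ b), hIcc]
  rfl

end SquarefreeTwoPow

open SquarefreeTwoPow in
theorem stmt_14 (C : ℝ)
    (hC : C = ∏' p : Nat.Primes,
      (1 - 3 * ((p : ℕ) : ℝ) ^ (-2 : ℤ) + 2 * ((p : ℕ) : ℝ) ^ (-3 : ℤ))) :
    0 < C ∧
    Tendsto (fun X : ℝ =>
        (∑ N ∈ (Finset.Icc ⌈X⌉₊ ⌊2 * X⌋₊).filter (fun N => Squarefree N),
          (2 : ℝ) ^ N.primeFactors.card) / (X * Real.log X))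
      atTop (nhds C) := by
  refine ⟨hC ▸ tprod_eulerFactor_pos, ?_⟩
  have hsum : ∑' d, correction d / d = C := hC ▸ hasProd_eulerFactor.tprod_eq.symm
  have hupper := tendsto_sum_Ioc_mul_sigma_zero_div summable_abs_correction_div two_pos
    (tendsto_nat_floor_mul_div_atTop zero_le_two)
  have hlower := tendsto_sum_Ioc_mul_sigma_zero_div summable_abs_correction_div one_pos
    (tendsto_natCast_sub_div tendsto_nat_ceil_div_atTop 1)
  rw [← weight_eq_correction_mul_sigma_zero, hsum] at hupper hlower
  have h := hupper.sub hlower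
  rw [show 2 * C - 1 * C = C by ring] at h
  refine h.congr' ?_
  filter_upwards [eventually_ge_atTop 1] with X hX
  have hceil : ⌈X⌉₊ ≤ ⌊2 * X⌋₊ + 1 :=
    (Nat.ceil_le_floor_add_one X).trans (by gcongr; linarith)
  rw [← sub_div, sum_Icc_filter_squarefree_eq_sub (Nat.one_le_ceil_iff.mpr (by linarith)) hceil]
end

section
/- There exist positive real constants C_1 and C_2 such that for every real X ≥ 1, the two-dimensional Lebesgue measure of the region R_X = {(a_4, a_6) in R^2 : |64·a_4^3 + 432·a_6^2| ≤ X} satisfies C_1 · X^{5/6} ≤ area(R_X) ≤ C_2 · X^{5/6}. That is, the area of R_X has order of magnitude X^{5/6}. -/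
/-! The linear substitution `(a, b) ↦ (-(X/64)^(1/3) a, (X/432)^(1/2) b)` pulls the region
`{(x, y) : |y² - x³| ≤ 1}` back to `R_X`, and its determinant has absolute value
`X^(5/6) / (64^(1/3) 432^(1/2))`; so the area of `R_X` is exactly a constant times `X^(5/6)`.
The constant is positive because the normalized region contains a neighbourhood of the origin,
and finite because for `x > 1` its vertical section has length
`2 (√(x³ + 1) - √(x³ - 1)) ≤ 4 x^(-3/2)`, which is integrable at infinity. -/

open MeasureTheory Set

theorem volume_preimage_prodMap_mul {c d : ℝ} (hc : c ≠ 0) (hd : d ≠ 0) (s : Set (ℝ × ℝ)) :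
    volume (Prod.map (c * ·) (d * ·) ⁻¹' s) = ENNReal.ofReal |(c * d)⁻¹| * volume s := by
  have hdet : LinearMap.det ((LinearMap.mulLeft ℝ c).prodMap (LinearMap.mulLeft ℝ d)) = c * d := by
    rw [LinearMap.det_prodMap, LinearMap.det_mulLeft, LinearMap.det_mulLeft]
  rw [← hdet]
  exact Measure.addHaar_preimage_linearMap volume (hdet ▸ mul_ne_zero hc hd) s

theorem volume_sq_mem_Icc {l u : ℝ} (hl : 0 ≤ l) (hlu : l ≤ u) :
    volume {b : ℝ | b ^ 2 ∈ Icc l u} = ENNReal.ofReal (2 * (√u - √l)) := by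
  have hset : {b : ℝ | b ^ 2 ∈ Icc l u} = Metric.closedBall 0 √u \ Metric.ball 0 √l := by
    ext b
    simp only [mem_ofPred_eq, mem_Icc, mem_sdiff, Metric.mem_closedBall, Metric.mem_ball,
      dist_zero_right, Real.norm_eq_abs, not_lt, ← Real.sqrt_sq_eq_abs,
      Real.sqrt_le_sqrt_iff (sq_nonneg b), Real.sqrt_le_sqrt_iff (hl.trans hlu)]
    tauto
  rw [hset, measure_sdiff (Metric.ball_subset_closedBall.trans
      (Metric.closedBall_subset_closedBall (Real.sqrt_le_sqrt hlu)))
      measurableSet_ball.nullMeasurableSet measure_ball_lt_top.ne,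
    Real.volume_closedBall, Real.volume_ball, ← ENNReal.ofReal_sub _ (by positivity)]
  ring_nf

theorem sqrt_sub_sqrt_le_div {l u s : ℝ} (hl : 0 ≤ l) (hlu : l ≤ u) (hs : 0 < s)
    (hsu : s ≤ √u) : √u - √l ≤ (u - l) / s := by
  have hu : 0 ≤ u := hl.trans hlu
  have hprod : (√u - √l) * (√u + √l) = u - l := by
    nlinarith [Real.sq_sqrt hu, Real.sq_sqrt hl]
  have : (√u - √l) * s ≤ u - l := by
    nlinarith [Real.sqrt_nonneg l, Real.sqrt_le_sqrt hlu]
  rwa [le_div_iff₀ hs]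

def mordellRegion : Set (ℝ × ℝ) := {x | |x.2 ^ 2 - x.1 ^ 3| ≤ 1}

theorem mordellRegion_inter_le_one_subset :
    mordellRegion ∩ {x | x.1 ≤ 1} ⊆ Icc (-1) 1 ×ˢ Icc (-2) 2 := by
  rintro ⟨a, b⟩ ⟨hab, ha⟩
  obtain ⟨h₁, h₂⟩ := abs_le.mp (show |b ^ 2 - a ^ 3| ≤ 1 from hab)
  simp only [mem_ofPred_eq] at ha h₁ h₂
  refine ⟨⟨?_, ha⟩, ?_, ?_⟩ <;> nlinarith [sq_nonneg b, sq_nonneg (a - 1), sq_nonneg (a + 1)]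

theorem volume_mordellRegion_section_le {a : ℝ} (ha : 1 < a) :
    volume (Prod.mk a ⁻¹' mordellRegion) ≤ ENNReal.ofReal (4 * a ^ (-(3 / 2 : ℝ))) := by
  have hsec : Prod.mk a ⁻¹' mordellRegion = {b : ℝ | b ^ 2 ∈ Icc (a ^ 3 - 1) (a ^ 3 + 1)} := by
    ext b
    simp only [mordellRegion, mem_preimage, mem_ofPred_eq, mem_Icc, abs_le]
    constructor <;> rintro ⟨h₁, h₂⟩ <;> constructor <;> linarith
  have ha3 : 1 ≤ a ^ 3 := one_le_pow₀ ha.le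
  have hs : a ^ (3 / 2 : ℝ) = √(a ^ 3) := by
    rw [Real.sqrt_eq_rpow, ← Real.rpow_natCast, ← Real.rpow_mul (by linarith)]
    norm_num
  rw [hsec, volume_sq_mem_Icc (by linarith) (by linarith)]
  refine ENNReal.ofReal_le_ofReal ?_
  have hgap := sqrt_sub_sqrt_le_div (u := a ^ 3 + 1) (l := a ^ 3 - 1) (by linarith)
    (by linarith) (Real.rpow_pos_of_pos (by linarith : (0 : ℝ) < a) (3 / 2))
    (by rw [hs]; exact Real.sqrt_le_sqrt (by linarith))
  rw [show (a ^ 3 + 1 - (a ^ 3 - 1)) / a ^ (3 / 2 : ℝ) = 2 * (a ^ (3 / 2 : ℝ))⁻¹ by ring] at hgap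
  rw [Real.rpow_neg (by linarith)]
  linarith

theorem measurableSet_mordellRegion : MeasurableSet mordellRegion :=
  measurableSet_le (by fun_prop) measurable_const

theorem volume_mordellRegion_inter_one_lt_lt_top :
    volume (mordellRegion ∩ {x | 1 < x.1}) < ⊤ := by
  have hmeas : MeasurableSet (mordellRegion ∩ {x : ℝ × ℝ | 1 < x.1}) :=
    measurableSet_mordellRegion.inter (measurableSet_lt measurable_const measurable_fst)
  have hsec : ∀ a, volume (Prod.mk a ⁻¹' (mordellRegion ∩ {x | 1 < x.1})) ≤
      (Ioi 1).indicator (fun a ↦ ENNReal.ofReal (4 * a ^ (-(3 / 2 : ℝ)))) a := by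
    intro a
    by_cases ha : 1 < a
    · rw [indicator_of_mem (mem_Ioi.mpr ha)]
      exact (measure_mono inter_subset_left).trans (volume_mordellRegion_section_le ha)
    · have : Prod.mk a ⁻¹' (mordellRegion ∩ {x | 1 < x.1}) = ∅ := by
        ext b; simp [ha]
      simp [this]
  have hint : IntegrableOn (fun a : ℝ ↦ 4 * a ^ (-(3 / 2 : ℝ))) (Ioi 1) :=
    (integrableOn_Ioi_rpow_of_lt (by norm_num) one_pos).const_mul 4
  rw [Measure.volume_eq_prod, Measure.prod_apply hmeas]
  calc _ ≤ ∫⁻ a, (Ioi 1).indicator (fun a ↦ ENNReal.ofReal (4 * a ^ (-(3 / 2 : ℝ)))) a :=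
        lintegral_mono hsec
    _ = ∫⁻ a in Ioi 1, ENNReal.ofReal (4 * a ^ (-(3 / 2 : ℝ))) :=
        lintegral_indicator measurableSet_Ioi _
    _ < ⊤ := hint.lintegral_lt_top

theorem volume_mordellRegion_lt_top : volume mordellRegion < ⊤ := by
  have hsplit :
      mordellRegion ⊆ (mordellRegion ∩ {x | x.1 ≤ 1}) ∪ (mordellRegion ∩ {x | 1 < x.1}) :=
    fun x hx ↦ (le_or_gt x.1 1).imp (⟨hx, ·⟩) (⟨hx, ·⟩)
  have hbounded : volume (mordellRegion ∩ {x | x.1 ≤ 1}) < ⊤ :=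
    (measure_mono mordellRegion_inter_le_one_subset).trans_lt
      (isCompact_Icc.prod isCompact_Icc).measure_lt_top
  exact (measure_mono hsplit).trans_lt ((measure_union_le _ _).trans_lt
    (ENNReal.add_lt_top.mpr ⟨hbounded, volume_mordellRegion_inter_one_lt_lt_top⟩))

theorem volume_mordellRegion_pos : 0 < volume mordellRegion := by
  have hopen : IsOpen {x : ℝ × ℝ | |x.2 ^ 2 - x.1 ^ 3| < 1} :=
    isOpen_lt (by fun_prop) continuous_const
  exact (hopen.measure_pos volume ⟨0, by simp⟩).trans_le
    (measure_mono fun x (hx : |x.2 ^ 2 - x.1 ^ 3| < 1) ↦ hx.le)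

theorem setOf_abs_cube_add_sq_le_eq_preimage {p q X : ℝ} (hp : 0 < p) (hq : 0 < q) (hX : 0 < X) :
    {x : ℝ × ℝ | |p * x.1 ^ 3 + q * x.2 ^ 2| ≤ X} =
      Prod.map (-(p / X) ^ (1 / 3 : ℝ) * ·) ((q / X) ^ (1 / 2 : ℝ) * ·) ⁻¹' mordellRegion := by
  have hc : ((p / X) ^ (1 / 3 : ℝ)) ^ 3 = p / X := by
    rw [← Real.rpow_natCast, ← Real.rpow_mul (by positivity)]; norm_num
  have hd : ((q / X) ^ (1 / 2 : ℝ)) ^ 2 = q / X := by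
    rw [← Real.rpow_natCast, ← Real.rpow_mul (by positivity)]; norm_num
  ext ⟨a, b⟩
  have hscale : ((q / X) ^ (1 / 2 : ℝ) * b) ^ 2 - (-(p / X) ^ (1 / 3 : ℝ) * a) ^ 3 =
      (p * a ^ 3 + q * b ^ 2) / X := by
    rw [mul_pow, mul_pow, neg_pow, hc, hd]; ring
  simp only [mordellRegion, mem_preimage, Prod.map, mem_ofPred_eq, hscale, abs_div,
    abs_of_pos hX, div_le_one hX]

theorem volume_setOf_abs_cube_add_sq_le {p q X : ℝ} (hp : 0 < p) (hq : 0 < q) (hX : 0 < X) :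
    volume {x : ℝ × ℝ | |p * x.1 ^ 3 + q * x.2 ^ 2| ≤ X} =
      ENNReal.ofReal (X ^ (5 / 6 : ℝ) / (p ^ (1 / 3 : ℝ) * q ^ (1 / 2 : ℝ))) *
        volume mordellRegion := by
  have hdet : |(-(p / X) ^ (1 / 3 : ℝ) * (q / X) ^ (1 / 2 : ℝ))⁻¹| =
      X ^ (5 / 6 : ℝ) / (p ^ (1 / 3 : ℝ) * q ^ (1 / 2 : ℝ)) := by
    rw [neg_mul, inv_neg, abs_neg, abs_of_pos (by positivity), Real.div_rpow hp.le hX.le,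
      Real.div_rpow hq.le hX.le, show (5 / 6 : ℝ) = 1 / 3 + 1 / 2 by norm_num,
      Real.rpow_add hX]
    field_simp
  rw [setOf_abs_cube_add_sq_le_eq_preimage hp hq hX,
    volume_preimage_prodMap_mul (neg_ne_zero.mpr (by positivity)) (by positivity), hdet]

theorem stmt_19 :
    ∃ C₁ C₂ : ℝ, 0 < C₁ ∧ 0 < C₂ ∧ ∀ X : ℝ, 1 ≤ X →
      C₁ * X ^ ((5 : ℝ) / 6) ≤
        (volume {x : ℝ × ℝ | |64 * x.1 ^ 3 + 432 * x.2 ^ 2| ≤ X}).toReal ∧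
      (volume {x : ℝ × ℝ | |64 * x.1 ^ 3 + 432 * x.2 ^ 2| ≤ X}).toReal ≤
        C₂ * X ^ ((5 : ℝ) / 6) := by
  set C := (volume mordellRegion).toReal / ((64 : ℝ) ^ (1 / 3 : ℝ) * (432 : ℝ) ^ (1 / 2 : ℝ))
  have hC : 0 < C := div_pos
    (ENNReal.toReal_pos volume_mordellRegion_pos.ne' volume_mordellRegion_lt_top.ne)
    (by positivity)
  have harea : ∀ X : ℝ, 0 < X →
      (volume {x : ℝ × ℝ | |64 * x.1 ^ 3 + 432 * x.2 ^ 2| ≤ X}).toReal = C * X ^ ((5 : ℝ) / 6) := by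
    intro X hX
    rw [volume_setOf_abs_cube_add_sq_le (by norm_num) (by norm_num) hX, ENNReal.toReal_mul,
      ENNReal.toReal_ofReal (by positivity)]
    ring
  refine ⟨C, C, hC, hC, fun X hX ↦ ?_⟩
  have h := harea X (by linarith)
  exact ⟨h.ge, h.le⟩
end
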